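/- arXiv:math/0203021 — 2 statements merged into one kernel-verified Lean document; each statement's English description precedes it below -/
import Mathlib

section
/- Let F be a field, N ≥ 1, and let k, n be natural numbers with 1 ≤ k < n. Then the F-dimension of the subspace S^n ∩ 𝔪^{k+1} of F[X_0, …, X_N] (the degree-n homogeneous part of the ideal power 𝔪^{k+1}, where 𝔪 = (X_1, …, X_N)) equals Σ_{i=k+1}^{n} C(i + N − 1, N − 1), where C denotes the binomial coefficient. -/
open MvPolynomial

/-- The ideal `𝔪 = (X 1, …, X N)` generated by the variables `X i` with `i ≠ 0`. -/
noncomputable def mIdeal (F : Type*) [CommSemiring F] (N : ℕ) :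
    Ideal (MvPolynomial (Fin (N + 1)) F) :=
  Ideal.span {p | ∃ i : Fin (N + 1), i ≠ 0 ∧ p = X i}

/-!
Since `𝔪` is generated by variables, it is a monomial ideal: a polynomial lies in `𝔪 ^ m` iff
each of its monomials has degree at least `m` in `X 1, …, X N`. Hence `S^n ∩ 𝔪^(k+1)` has the
basis of monomials `X^d` with `|d| = n` and `d 1 + ⋯ + d N ≥ k + 1`. Such a `d` is determined
by its tail `(d 1, …, d N)`, whose degree `i` ranges over `k + 1, …, n`, and there are
`C(i + N - 1, N - 1)` tails of degree `i`.
-/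

open Finset Finsupp

lemma Finsupp.weight_mono {σ : Type*} (w : σ → ℕ) : Monotone (weight w : (σ →₀ ℕ) → ℕ) := by
  intro d e hde
  obtain ⟨c, rfl⟩ := le_iff_exists_add.mp hde
  simp

lemma Finsupp.exists_mem_ne_zero_of_weight_indicator_one_ne_zero {σ : Type*} {s : Set σ}
    {d : σ →₀ ℕ} (hd : weight (s.indicator 1) d ≠ 0) : ∃ i ∈ s, d i ≠ 0 := by
  contrapose! hd
  rw [weight_apply]
  refine sum_eq_zero fun i _ => ?_
  by_cases hi : i ∈ s
  · simp [hd i hi]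
  · simp [hi]

lemma Finsupp.degree_eq_add_degree_tail {n : ℕ} (d : Fin (n + 1) →₀ ℕ) :
    d.degree = d 0 + d.tail.degree := by
  simp [degree_eq_sum, Fin.sum_univ_succ, tail_apply]

lemma Finsupp.weight_indicator_ne_zero_eq_degree_tail {n : ℕ} (d : Fin (n + 1) →₀ ℕ) :
    weight ({i | i ≠ 0}.indicator 1) d = d.tail.degree := by
  simp [weight_eq_sum, degree_eq_sum, Fin.sum_univ_succ, tail_apply, Fin.succ_ne_zero]

namespace Finset

lemma mem_finsuppAntidiag_univ {ι : Type*} [Fintype ι] [DecidableEq ι] {n : ℕ} {d : ι →₀ ℕ} :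
    d ∈ finsuppAntidiag univ n ↔ d.degree = n := by
  simp [mem_finsuppAntidiag, degree_eq_sum]

lemma card_finsuppAntidiag_fin_eq_choose {N : ℕ} (hN : 1 ≤ N) (j : ℕ) :
    #(finsuppAntidiag (univ : Finset (Fin N)) j) = (j + N - 1).choose (N - 1) := by
  obtain ⟨M, rfl⟩ := Nat.exists_eq_add_of_le' hN
  rw [card_finsuppAntidiag_nat_eq_choose, card_univ, Fintype.card_fin,
    show M + 1 + j - 1 = M + j by omega, show j + (M + 1) - 1 = M + j by omega,
    Nat.add_sub_cancel, Nat.choose_symm_add]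

lemma card_filter_degree_tail_eq {N n j : ℕ} (hj : j ≤ n) :
    #{d ∈ finsuppAntidiag (univ : Finset (Fin (N + 1))) n | d.tail.degree = j} =
      #(finsuppAntidiag (univ : Finset (Fin N)) j) := by
  refine card_nbij' tail (Finsupp.cons (n - j)) ?_ ?_ ?_ ?_
  · intro d hd
    simp only [coe_filter, mem_finsuppAntidiag_univ, Set.mem_ofPred_eq, mem_coe] at hd ⊢
    exact hd.2
  · intro e he
    simp only [coe_filter, mem_finsuppAntidiag_univ, Set.mem_ofPred_eq, mem_coe] at he ⊢
    rw [degree_eq_add_degree_tail, cons_zero, tail_cons, he, Nat.sub_add_cancel hj]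
    exact ⟨rfl, rfl⟩
  · intro d hd
    simp only [coe_filter, mem_finsuppAntidiag_univ, Set.mem_ofPred_eq] at hd
    rw [← hd.2, ← hd.1, degree_eq_add_degree_tail, Nat.add_sub_cancel, cons_tail]
  · intro e _
    exact tail_cons _ _

lemma card_filter_le_degree_tail {N : ℕ} (hN : 1 ≤ N) (m n : ℕ) :
    #{d ∈ finsuppAntidiag (univ : Finset (Fin (N + 1))) n | m ≤ d.tail.degree} =
      ∑ j ∈ Icc m n, (j + N - 1).choose (N - 1) := by
  rw [card_eq_sum_card_fiberwise (f := fun d => d.tail.degree) (t := Icc m n)]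
  · refine sum_congr rfl fun j hj => ?_
    rw [mem_Icc] at hj
    rw [filter_filter, filter_congr fun d _ => and_iff_right_of_imp fun h => h ▸ hj.1,
      card_filter_degree_tail_eq hj.2, card_finsuppAntidiag_fin_eq_choose hN]
  · intro d hd
    simp only [coe_filter, mem_finsuppAntidiag_univ, Set.mem_ofPred_eq] at hd
    simp only [coe_Icc, Set.mem_Icc]
    exact ⟨hd.2, by rw [← hd.1, degree_eq_add_degree_tail]; omega⟩

end Finset

namespace MvPolynomial

variable {σ R : Type*} [CommSemiring R]

variable (R) in
noncomputable abbrev restrictWeightIdeal (w : σ → ℕ) (m : ℕ) : Ideal (MvPolynomial σ R) :=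
  restrictSupportIdeal R {d | m ≤ weight w d} ((isUpperSet_Ici m).preimage (weight_mono w))

lemma mem_restrictWeightIdeal {w : σ → ℕ} {m : ℕ} {p : MvPolynomial σ R} :
    p ∈ restrictWeightIdeal R w m ↔ ∀ d ∈ p.support, m ≤ weight w d :=
  Iff.rfl

lemma restrictWeightIdeal_mul_le (w : σ → ℕ) (a b : ℕ) :
    restrictWeightIdeal R w a * restrictWeightIdeal R w b ≤ restrictWeightIdeal R w (a + b) := by
  classical
  refine Ideal.mul_le.mpr fun p hp q hq => mem_restrictWeightIdeal.mpr fun d hd => ?_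
  obtain ⟨e, he, f, hf, rfl⟩ := mem_add.mp (support_mul p q hd)
  rw [map_add]
  exact add_le_add (mem_restrictWeightIdeal.mp hp e he) (mem_restrictWeightIdeal.mp hq f hf)

lemma span_X_image_le_restrictWeightIdeal_one (s : Set σ) :
    Ideal.span (X '' s) ≤ restrictWeightIdeal R (s.indicator 1) 1 := by
  rw [Ideal.span_le]
  rintro _ ⟨i, hi, rfl⟩
  refine mem_restrictWeightIdeal.mpr fun d hd => ?_
  simp [mem_singleton.mp (support_monomial_subset hd), weight_single, Set.indicator_of_mem hi]

lemma pow_span_X_image_le_restrictWeightIdeal (s : Set σ) (m : ℕ) :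
    Ideal.span (X '' s) ^ m ≤ restrictWeightIdeal R (s.indicator 1) m := by
  induction m with
  | zero => intro p _ d _; exact Nat.zero_le _
  | succ m ih =>
    rw [pow_succ]
    exact (Ideal.mul_mono ih (span_X_image_le_restrictWeightIdeal_one s)).trans
      (restrictWeightIdeal_mul_le _ m 1)

lemma monomial_one_mem_pow_span_X_image {s : Set σ} {m : ℕ} {d : σ →₀ ℕ}
    (hd : m ≤ weight (s.indicator 1) d) :
    monomial d (1 : R) ∈ Ideal.span (X '' s) ^ m := by
  induction m generalizing d with
  | zero => simp
  | succ m ih =>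
    obtain ⟨i, hi, hdi⟩ := exists_mem_ne_zero_of_weight_indicator_one_ne_zero (s := s) (d := d)
      (by omega)
    obtain ⟨e, rfl⟩ := le_iff_exists_add'.mp
      (single_le_iff.mpr (Nat.one_le_iff_ne_zero.mpr hdi) : single i 1 ≤ d)
    rw [map_add, weight_single, Set.indicator_of_mem hi] at hd
    rw [← mul_one (1 : R), ← monomial_mul, pow_succ]
    exact Ideal.mul_mem_mul (ih (by simpa using hd)) (Ideal.subset_span ⟨i, hi, rfl⟩)

lemma restrictScalars_pow_span_X_image (s : Set σ) (m : ℕ) :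
    (Ideal.span (X '' s) ^ m).restrictScalars R =
      restrictSupport R {d | m ≤ weight (s.indicator 1) d} := by
  refine le_antisymm (fun p hp => pow_span_X_image_le_restrictWeightIdeal s m hp) ?_
  rw [restrictSupport_eq_span, Submodule.span_le]
  rintro _ ⟨d, hd, rfl⟩
  exact monomial_one_mem_pow_span_X_image hd

lemma homogeneousSubmodule_inf_restrictScalars_pow_span_X_image [Fintype σ] [DecidableEq σ]
    (s : Set σ) (n m : ℕ) :
    homogeneousSubmodule σ R n ⊓ (Ideal.span (X '' s) ^ m).restrictScalars R =
      restrictSupport R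
        ↑{d ∈ finsuppAntidiag (univ : Finset σ) n | m ≤ weight (s.indicator 1) d} := by
  ext p
  rw [Submodule.mem_inf, restrictScalars_pow_span_X_image, homogeneousSubmodule_eq_finsupp_supported]
  change p ∈ restrictSupport R _ ∧ p ∈ restrictSupport R _ ↔ p ∈ restrictSupport R _
  simp only [mem_restrictSupport_iff, ← Set.subset_inter_iff]
  congr! 1
  ext d
  simp [mem_finsuppAntidiag, degree_eq_sum]

lemma finrank_restrictSupport_coe {R : Type*} [CommRing R] [Nontrivial R]
    (t : Finset (σ →₀ ℕ)) : Module.finrank R (restrictSupport R (t : Set (σ →₀ ℕ))) = #t := by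
  rw [Module.finrank_eq_nat_card_basis (basisRestrictSupport R _), Nat.card_coe_set_eq,
    Set.ncard_coe_finset]

end MvPolynomial

lemma mIdeal_eq_span_X_image (F : Type*) [CommSemiring F] (N : ℕ) :
    mIdeal F N = Ideal.span (X '' {i | i ≠ 0}) := by
  rw [mIdeal]
  congr 1
  ext p
  simp [eq_comm]

theorem stmt_8_general {F : Type*} [Field F] {N : ℕ} (hN : 1 ≤ N)
    (k n : ℕ) :
    Module.finrank F
        ↥(homogeneousSubmodule (Fin (N + 1)) F n ⊓
            Submodule.restrictScalars F ((mIdeal F N) ^ (k + 1))) =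
      ∑ i ∈ Finset.Icc (k + 1) n, Nat.choose (i + N - 1) (N - 1) := by
  rw [mIdeal_eq_span_X_image, homogeneousSubmodule_inf_restrictScalars_pow_span_X_image,
    finrank_restrictSupport_coe]
  simp only [weight_indicator_ne_zero_eq_degree_tail]
  exact card_filter_le_degree_tail hN (k + 1) n

theorem stmt_8 {F : Type*} [Field F] {N : ℕ} (hN : 1 ≤ N)
    (k n : ℕ) (hk : 1 ≤ k) (hkn : k < n) :
    Module.finrank F
        ↥(homogeneousSubmodule (Fin (N + 1)) F n ⊓
            Submodule.restrictScalars F ((mIdeal F N) ^ (k + 1))) =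
      ∑ i ∈ Finset.Icc (k + 1) n, Nat.choose (i + N - 1) (N - 1) :=
  stmt_8_general hN k n
end

section
/- Let F be a field of characteristic zero, N ≥ 1, and let k, n be natural numbers with 1 ≤ k < n. Then the map ∂_0^{n−k} induces an F-linear isomorphism S^n / (S^n ∩ 𝔪^{k+1}) ≅ S^k between the quotient of the degree-n homogeneous polynomials by the degree-n homogeneous part of the ideal power 𝔪^{k+1} (where 𝔪 = (X_1, …, X_N)) and the space of degree-k homogeneous polynomials. -/
/-!
In characteristic zero, `∂_0^m` kills a monomial `X^d` exactly when `d 0 < m`; for `X^d` of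
degree `k + m` this says that its degree in `X_1, …, X_N` is at least `k + 1`, i.e. that
`X^d ∈ 𝔪^(k+1)`. Since both conditions are read off monomial by monomial, the kernel of
`∂_0^m : S^(k+m) → S^k` is `S^(k+m) ∩ 𝔪^(k+1)`. The map is onto because `∂_0` has the
degree-raising right inverse `X^d ↦ X^(d + e_0) / (d 0 + 1)`.
-/

open MvPolynomial

/-- The `m`-fold iterate of the partial derivative with respect to `X 0`,
as an `F`-linear endomorphism. -/
noncomputable def pd0pow (F : Type*) [CommSemiring F] (N : ℕ) (m : ℕ) :
    MvPolynomial (Fin (N + 1)) F →ₗ[F] MvPolynomial (Fin (N + 1)) F :=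
  (pderiv (0 : Fin (N + 1))).toLinearMap ^ m

open Finsupp

theorem Finsupp.degree_eq_add_degree_erase {σ : Type*} (i : σ) (d : σ →₀ ℕ) :
    d.degree = d i + (d.erase i).degree := by
  conv_lhs => rw [← single_add_erase i d]
  rw [map_add, degree_single]

namespace MvPolynomial

variable {σ R : Type*} [CommSemiring R]

theorem monomial_mem_span_X_compl_pow (i : σ) (d : σ →₀ ℕ) (r : R) :
    monomial d r ∈ Ideal.span (X '' {i}ᶜ : Set (MvPolynomial σ R)) ^ (d.erase i).degree := by
  classical
  set I := Ideal.span (X '' {i}ᶜ : Set (MvPolynomial σ R))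
  have hsplit : monomial d r = monomial (single i (d i)) r * monomial (d.erase i) 1 := by
    rw [monomial_mul, mul_one, single_add_erase]
  have hprod : monomial (d.erase i) (1 : R) ∈ I ^ (d.erase i).degree := by
    rw [monomial_eq, C_1, one_mul, Finsupp.prod, degree_apply, ← Finset.prod_pow_eq_pow_sum]
    refine Ideal.prod_mem_prod fun j hj => Ideal.pow_mem_pow (Ideal.subset_span ?_) _
    exact Set.mem_image_of_mem X (by rintro rfl; simp at hj)
  rw [hsplit]
  exact Ideal.mul_mem_left _ _ hprod

theorem le_degree_erase_of_mem_span_X_compl_pow {i : σ} {j : ℕ} {f : MvPolynomial σ R}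
    (hf : f ∈ Ideal.span (X '' {i}ᶜ : Set (MvPolynomial σ R)) ^ j) :
    ∀ d ∈ f.support, j ≤ (d.erase i).degree := by
  classical
  induction j generalizing f with
  | zero => simp
  | succ j ih =>
    rw [pow_succ] at hf
    refine Submodule.mul_induction_on hf (fun a ha b hb d hd => ?_) (fun a b ha hb d hd => ?_)
    · obtain ⟨da, hda, db, hdb, rfl⟩ := Finset.mem_add.mp (support_mul a b hd)
      obtain ⟨l, hl, hdbl⟩ := mem_ideal_span_X_image.mp hb db hdb
      have : 1 ≤ (db.erase i).degree :=
        (Nat.one_le_iff_ne_zero.mpr (by rwa [erase_ne hl])).trans (le_degree l _)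
      rw [erase_add, map_add]
      have := ih ha da hda
      omega
    · rcases Finset.mem_union.mp (support_add hd) with h | h
      exacts [ha d h, hb d h]

theorem mem_span_X_compl_pow_iff {i : σ} {j : ℕ} {f : MvPolynomial σ R} :
    f ∈ Ideal.span (X '' {i}ᶜ : Set (MvPolynomial σ R)) ^ j ↔
      ∀ d ∈ f.support, j ≤ (d.erase i).degree := by
  refine ⟨le_degree_erase_of_mem_span_X_compl_pow, fun h => ?_⟩
  rw [f.as_sum]
  exact Submodule.sum_mem _ fun d hd =>
    Ideal.pow_le_pow_right (h d hd) (monomial_mem_span_X_compl_pow i d _)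

theorem coeff_iterate_pderiv (i : σ) (m : ℕ) (f : MvPolynomial σ R) (e : σ →₀ ℕ) :
    coeff e ((pderiv i)^[m] f) = coeff (e + single i m) f * (e i + m).descFactorial m := by
  induction m generalizing f with
  | zero => simp
  | succ m ih =>
    rw [Function.iterate_succ_apply, ih, coeff_pderiv, add_assoc, ← single_add, mul_assoc]
    congr 2
    simp only [Finsupp.add_apply, single_eq_same]
    push_cast [← add_assoc, Nat.succ_descFactorial_succ]
    ring

theorem iterate_pderiv_eq_zero_iff [IsAddTorsionFree R] {i : σ} {m : ℕ} {f : MvPolynomial σ R} :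
    (pderiv i)^[m] f = 0 ↔ ∀ d ∈ f.support, d i < m := by
  refine ⟨fun h d hd => ?_, fun h => ?_⟩
  · by_contra! hmd
    have hle : single i m ≤ d := single_le_iff.mpr hmd
    have hcoeff := coeff_iterate_pderiv i m f (d - single i m)
    rw [h, coeff_zero, tsub_add_cancel_of_le hle, mul_comm, ← nsmul_eq_mul] at hcoeff
    have hdesc : ((d - single i m) i + m).descFactorial m ≠ 0 := by
      rw [Ne, Nat.descFactorial_eq_zero_iff_lt, tsub_apply, single_eq_same]
      omega
    exact mem_support_iff.mp hd ((nsmul_eq_zero_iff_right hdesc).mp hcoeff.symm)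
  · ext e
    rw [coeff_iterate_pderiv, coeff_zero, notMem_support_iff.mp, zero_mul]
    exact fun hd => by simpa using h _ hd

theorem IsHomogeneous.iterate_pderiv {φ : MvPolynomial σ R} {n : ℕ} (h : φ.IsHomogeneous n)
    (i : σ) (m : ℕ) : ((pderiv i)^[m] φ).IsHomogeneous (n - m) := by
  induction m with
  | zero => exact h
  | succ m ih =>
    rw [Function.iterate_succ_apply', Nat.sub_succ]
    exact ih.pderiv

theorem IsHomogeneous.degree_eq {φ : MvPolynomial σ R} {n : ℕ} (h : φ.IsHomogeneous n)
    {d : σ →₀ ℕ} (hd : d ∈ φ.support) : d.degree = n := by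
  rw [degree_eq_weight_one]
  exact h (mem_support_iff.mp hd)

theorem IsHomogeneous.iterate_pderiv_eq_zero_iff [IsAddTorsionFree R] {φ : MvPolynomial σ R}
    {k m : ℕ} (h : φ.IsHomogeneous (k + m)) (i : σ) :
    (pderiv i)^[m] φ = 0 ↔ φ ∈ Ideal.span (X '' {i}ᶜ : Set (MvPolynomial σ R)) ^ (k + 1) := by
  rw [MvPolynomial.iterate_pderiv_eq_zero_iff, mem_span_X_compl_pow_iff]
  refine forall₂_congr fun d hd => ?_
  have := h.degree_eq hd
  rw [degree_eq_add_degree_erase i] at this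
  omega

variable (σ R) in
noncomputable def iteratePderivOnHomogeneous (i : σ) (k m : ℕ) :
    homogeneousSubmodule σ R (k + m) →ₗ[R] homogeneousSubmodule σ R k :=
  ((pderiv i).toLinearMap ^ m).restrict fun f hf => by
    rw [Module.End.pow_apply, mem_homogeneousSubmodule]
    simpa using (hf : f.IsHomogeneous (k + m)).iterate_pderiv i m

theorem iteratePderivOnHomogeneous_apply (i : σ) (k m : ℕ)
    (f : homogeneousSubmodule σ R (k + m)) :
    (iteratePderivOnHomogeneous σ R i k m f : MvPolynomial σ R) = (pderiv i)^[m] f :=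
  Module.End.pow_apply _ _ _

theorem ker_iteratePderivOnHomogeneous [IsAddTorsionFree R] (i : σ) (k m : ℕ) :
    LinearMap.ker (iteratePderivOnHomogeneous σ R i k m) =
      ((Ideal.span (X '' {i}ᶜ : Set (MvPolynomial σ R)) ^ (k + 1)).restrictScalars R).comap
        (homogeneousSubmodule σ R (k + m)).subtype := by
  ext f
  rw [LinearMap.mem_ker, Submodule.mem_comap, Submodule.restrictScalars_mem,
    Submodule.subtype_apply, ← Submodule.coe_eq_zero, iteratePderivOnHomogeneous_apply]
  exact f.2.iterate_pderiv_eq_zero_iff i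

section Field

variable {K : Type*} [Field K] [CharZero K]

theorem IsHomogeneous.exists_pderiv_eq {g : MvPolynomial σ K} {n : ℕ} (h : g.IsHomogeneous n)
    (i : σ) : ∃ f : MvPolynomial σ K, f.IsHomogeneous (n + 1) ∧ pderiv i f = g := by
  classical
  refine ⟨∑ d ∈ g.support, monomial (d + single i 1) (coeff d g / (d i + 1)), ?_, ?_⟩
  · refine IsHomogeneous.sum _ _ _ fun d hd => isHomogeneous_monomial _ ?_
    rw [map_add, degree_single, h.degree_eq hd]
  · conv_rhs => rw [g.as_sum]
    rw [map_sum]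
    refine Finset.sum_congr rfl fun d _ => ?_
    rw [pderiv_monomial, add_tsub_cancel_right, Finsupp.add_apply, single_eq_same]
    push_cast
    rw [div_mul_cancel₀ _ (Nat.cast_add_one_ne_zero (d i))]

theorem IsHomogeneous.exists_iterate_pderiv_eq {g : MvPolynomial σ K} {n : ℕ}
    (h : g.IsHomogeneous n) (i : σ) (m : ℕ) :
    ∃ f : MvPolynomial σ K, f.IsHomogeneous (n + m) ∧ (pderiv i)^[m] f = g := by
  induction m with
  | zero => exact ⟨g, h, rfl⟩
  | succ m ih =>
    obtain ⟨f', hf', rfl⟩ := ih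
    obtain ⟨f, hf, rfl⟩ := hf'.exists_pderiv_eq i
    exact ⟨f, hf, by rw [Function.iterate_succ_apply]⟩

theorem iteratePderivOnHomogeneous_surjective (i : σ) (k m : ℕ) :
    Function.Surjective (iteratePderivOnHomogeneous σ K i k m) := fun g => by
  obtain ⟨f, hf, hfg⟩ := g.2.exists_iterate_pderiv_eq i m
  exact ⟨⟨f, hf⟩, Subtype.ext (by rw [iteratePderivOnHomogeneous_apply, hfg])⟩

variable (σ K) in
noncomputable def homogeneousQuotSpanXComplPowEquiv (i : σ) (k m : ℕ) :
    (homogeneousSubmodule σ K (k + m) ⧸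
        ((Ideal.span (X '' {i}ᶜ : Set (MvPolynomial σ K)) ^ (k + 1)).restrictScalars K).comap
          (homogeneousSubmodule σ K (k + m)).subtype) ≃ₗ[K] homogeneousSubmodule σ K k :=
  (Submodule.quotEquivOfEq _ _ (ker_iteratePderivOnHomogeneous i k m).symm).trans
    (LinearMap.quotKerEquivOfSurjective _ (iteratePderivOnHomogeneous_surjective i k m))

theorem homogeneousQuotSpanXComplPowEquiv_mk (i : σ) (k m : ℕ)
    (f : homogeneousSubmodule σ K (k + m)) :
    (homogeneousQuotSpanXComplPowEquiv σ K i k m (Submodule.Quotient.mk f) : MvPolynomial σ K) =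
      (pderiv i)^[m] f := by
  rw [homogeneousQuotSpanXComplPowEquiv, LinearEquiv.trans_apply, Submodule.quotEquivOfEq_mk,
    LinearMap.quotKerEquivOfSurjective_apply_mk, iteratePderivOnHomogeneous_apply]

end Field

end MvPolynomial

theorem mIdeal_eq_span_X_compl (F : Type*) [CommSemiring F] (N : ℕ) :
    mIdeal F N = Ideal.span (X '' {0}ᶜ) := by
  simp only [mIdeal, Set.image, eq_comm]
  rfl

theorem stmt_10_general {F : Type*} [Field F] [CharZero F] {N : ℕ}
    (k n : ℕ) (hkn : k < n) :
    ∃ e : (↥(homogeneousSubmodule (Fin (N + 1)) F n) ⧸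
            (Submodule.restrictScalars F ((mIdeal F N) ^ (k + 1))).comap
              (homogeneousSubmodule (Fin (N + 1)) F n).subtype) ≃ₗ[F]
          ↥(homogeneousSubmodule (Fin (N + 1)) F k),
      ∀ f : ↥(homogeneousSubmodule (Fin (N + 1)) F n),
        (e (Submodule.Quotient.mk f) : MvPolynomial (Fin (N + 1)) F) =
          pd0pow F N (n - k) (f : MvPolynomial (Fin (N + 1)) F) := by
  obtain ⟨m, rfl⟩ : ∃ m, n = k + m := ⟨n - k, by omega⟩
  rw [mIdeal_eq_span_X_compl, Nat.add_sub_cancel_left]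
  exact ⟨homogeneousQuotSpanXComplPowEquiv _ F 0 k m, fun f =>
    (homogeneousQuotSpanXComplPowEquiv_mk 0 k m f).trans (Module.End.pow_apply _ _ _).symm⟩

theorem stmt_10 {F : Type*} [Field F] [CharZero F] {N : ℕ} (hN : 1 ≤ N)
    (k n : ℕ) (hk : 1 ≤ k) (hkn : k < n) :
    ∃ e : (↥(homogeneousSubmodule (Fin (N + 1)) F n) ⧸
            (Submodule.restrictScalars F ((mIdeal F N) ^ (k + 1))).comap
              (homogeneousSubmodule (Fin (N + 1)) F n).subtype) ≃ₗ[F]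
          ↥(homogeneousSubmodule (Fin (N + 1)) F k),
      ∀ f : ↥(homogeneousSubmodule (Fin (N + 1)) F n),
        (e (Submodule.Quotient.mk f) : MvPolynomial (Fin (N + 1)) F) =
          pd0pow F N (n - k) (f : MvPolynomial (Fin (N + 1)) F) :=
  stmt_10_general k n hkn
end
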